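/- arXiv:2003.00644 — 3 statements merged into one kernel-verified Lean document; each statement's English description precedes it below -/
import Mathlib

section
/- For every n ≥ 1, the positive orthant {x ∈ ℝⁿ : xᵢ > 0 for every coordinate i} does not belong to 𝒢ₙ, i.e., it is not definable by any existential loose [0,1]-guarded real arithmetic formula. -/
/-- The family `𝒢ₙ` of subsets of `ℝⁿ` definable by existential loose
`[0,1]`-guarded real arithmetic: the smallest collection containing all
polynomial inequality sets `{x | p(x) ≤ q(x)}`, closed under binary unions
and intersections, and closed under guarded projection
`{x | ∃ y ∈ [0,1], (x,y) ∈ A}`. -/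
inductive GuardedDef : (n : ℕ) → Set (Fin n → ℝ) → Prop
  | poly (n : ℕ) (p q : MvPolynomial (Fin n) ℝ) :
      GuardedDef n {x | MvPolynomial.eval x p ≤ MvPolynomial.eval x q}
  | union {n : ℕ} {A B : Set (Fin n → ℝ)} :
      GuardedDef n A → GuardedDef n B → GuardedDef n (A ∪ B)
  | inter {n : ℕ} {A B : Set (Fin n → ℝ)} :
      GuardedDef n A → GuardedDef n B → GuardedDef n (A ∩ B)
  | proj {n : ℕ} {A : Set (Fin (n + 1) → ℝ)} :
      GuardedDef (n + 1) A →
      GuardedDef n {x | ∃ y ∈ Set.Icc (0 : ℝ) 1, Fin.snoc x y ∈ A}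

lemma continuous_snoc (n : ℕ) :
    Continuous (fun p : (Fin n → ℝ) × Set.Icc (0:ℝ) 1 =>
      (Fin.snoc p.1 (p.2 : ℝ) : Fin (n+1) → ℝ)) := by
  refine continuous_pi fun i => ?_
  refine Fin.lastCases ?_ (fun j => ?_) i
  · simpa [Fin.snoc_last, Function.comp_def] using
      (continuous_subtype_val.comp continuous_snd)
  · simpa [Fin.snoc_castSucc, Function.comp_def] using
      ((continuous_apply j).comp continuous_fst)

lemma GuardedDef.isClosed {n : ℕ} {A : Set (Fin n → ℝ)}
    (h : GuardedDef n A) : IsClosed A := by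
  induction h with
  | poly n p q =>
      exact isClosed_le (p.continuous_eval) (q.continuous_eval)
  | union _ _ ihA ihB => exact ihA.union ihB
  | inter _ _ ihA ihB => exact ihA.inter ihB
  | @proj n A _ ih =>
      have key : {x : Fin n → ℝ | ∃ y ∈ Set.Icc (0 : ℝ) 1, Fin.snoc x y ∈ A} =
          Prod.fst '' ((fun p : (Fin n → ℝ) × Set.Icc (0:ℝ) 1 =>
            (Fin.snoc p.1 (p.2 : ℝ) : Fin (n+1) → ℝ)) ⁻¹' A) := by
        ext x
        constructor
        · rintro ⟨y, hy, hA⟩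
          exact ⟨(x, ⟨y, hy⟩), hA, rfl⟩
        · rintro ⟨⟨x', y⟩, hA, rfl⟩
          exact ⟨y, y.2, hA⟩
      rw [key]
      exact isClosedMap_fst_of_compactSpace _ (ih.preimage (continuous_snoc n))

/-- For every `n ≥ 1`, the positive orthant `{x ∈ ℝⁿ : ∀ i, xᵢ > 0}` is not
definable by any existential loose `[0,1]`-guarded real arithmetic formula. -/
theorem positive_orthant_not_guardedDef (n : ℕ) (hn : 1 ≤ n) :
    ¬ GuardedDef n {x : Fin n → ℝ | ∀ i, 0 < x i} := by
  intro h
  have hc := h.isClosed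
  have hmem : (fun _ : Fin n => (0:ℝ)) ∈ {x : Fin n → ℝ | ∀ i, 0 < x i} := by
    have : (fun _ : Fin n => (0:ℝ)) ∈
        closure {x : Fin n → ℝ | ∀ i, 0 < x i} := by
      have h1 : Filter.Tendsto (fun k : ℕ => fun _ : Fin n => (1:ℝ)/(k+1))
          Filter.atTop (nhds (fun _ : Fin n => (0:ℝ))) := by
        refine tendsto_pi_nhds.2 fun i => ?_
        simpa using (tendsto_one_div_add_atTop_nhds_zero_nat :
          Filter.Tendsto (fun k : ℕ => (1:ℝ)/((k:ℝ)+1)) Filter.atTop (nhds 0))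
      refine mem_closure_of_tendsto h1 (Filter.Eventually.of_forall fun k => ?_)
      intro i
      positivity
    rwa [hc.closure_eq] at this
  have := hmem ⟨0, hn⟩
  simp at this
end

section
/- For all real numbers i and j: i < j if and only if there exist real numbers r, n, m such that 1 ≤ n, 1 ≤ m, n = r·m, and i + r = j. -/
/-- For all reals `i, j`: `i < j` iff there exist reals `r, n, m` with
`1 ≤ n`, `1 ≤ m`, `n = r * m`, and `i + r = j`. -/
theorem lt_iff_exists_ratio (i j : ℝ) :
    i < j ↔ ∃ r n m : ℝ, 1 ≤ n ∧ 1 ≤ m ∧ n = r * m ∧ i + r = j := by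
  constructor
  · intro h
    set r := j - i with hr
    have hrpos : 0 < r := by simp [hr]; linarith
    refine ⟨r, r * max 1 (1/r), max 1 (1/r), ?_, le_max_left _ _, rfl, by ring⟩
    calc (1:ℝ) = r * (1/r) := by field_simp
    _ ≤ r * max 1 (1/r) := by
        exact mul_le_mul_of_nonneg_left (le_max_right _ _) hrpos.le
  · rintro ⟨r, n, m, hn, hm, hnm, hij⟩
    have hmpos : 0 < m := by linarith
    have hrpos : 0 < r := by
      by_contra hc
      push_neg at hc
      nlinarith
    linarith
end

section
/- Let N ≥ 1 and let f : {0,…,N−1} → ℝ. Suppose g : {0,…,N−1} × {0,…,N−1} → ℝ satisfies: (a) g(x,0) + g(x,0) = f(x) for all x; (b) g(y+1,y+1) + g(y+1,y+1) = g(y+1,y) + g(y,y) for all y with y+1 ≤ N−1; and (c) g(x,y+1) + g(x,y+1) = g(x,y) for all x, y with y+1 < x ≤ N−1. Then for every y ≤ N−1: g(y,y) = 2^{−(y+1)} · (f(0) + f(1) + ⋯ + f(y)), and g(x,y) = 2^{−(y+1)} · f(x) for every x with y < x ≤ N−1. -/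
/-- Partial-sum recurrence: if `g` halves `f` at column `0`, halves the sum of
the two entries below-left on the diagonal, and halves the previous column
entry off the diagonal, then the diagonal stores exponentially scaled partial
sums of `f` and the off-diagonal entries store exponentially scaled values
of `f`. -/
theorem scaled_partial_sums (N : ℕ) (hN : 1 ≤ N) (f : ℕ → ℝ) (g : ℕ → ℕ → ℝ)
    (ha : ∀ x, x ≤ N - 1 → g x 0 + g x 0 = f x)
    (hb : ∀ y, y + 1 ≤ N - 1 →
      g (y + 1) (y + 1) + g (y + 1) (y + 1) = g (y + 1) y + g y y)
    (hc : ∀ x y, y + 1 < x → x ≤ N - 1 →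
      g x (y + 1) + g x (y + 1) = g x y) :
    ∀ y, y ≤ N - 1 →
      (g y y = (2 : ℝ) ^ (-(y + 1 : ℤ)) * ∑ i ∈ Finset.range (y + 1), f i) ∧
      (∀ x, y < x → x ≤ N - 1 → g x y = (2 : ℝ) ^ (-(y + 1 : ℤ)) * f x) := by
  intro y
  induction y with
  | zero =>
    intro hy
    constructor
    · have h := ha 0 hy
      rw [Finset.sum_range_one]
      rw [show (-((0:ℕ) + 1 : ℤ)) = -1 by norm_num, zpow_neg_one]
      linarith
    · intro x hx hx'
      have h := ha x hx'
      rw [show (-((0:ℕ) + 1 : ℤ)) = -1 by norm_num, zpow_neg_one]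
      linarith
  | succ y ih =>
    intro hy
    have hy' : y ≤ N - 1 := le_trans (Nat.le_succ y) hy
    obtain ⟨ih1, ih2⟩ := ih hy'
    have hpow : (2 : ℝ) ^ (-((y:ℤ) + 1 + 1)) * 2 = 2 ^ (-((y:ℤ) + 1)) := by
      rw [← zpow_add_one₀ (by norm_num : (2:ℝ) ≠ 0)]
      ring_nf
    constructor
    · have hb' := hb y hy
      have h2 := ih2 (y + 1) (Nat.lt_succ_self y) hy
      rw [ih1, h2] at hb'
      have : g (y + 1) (y + 1) * 2 =
          (2 : ℝ) ^ (-((y:ℤ) + 1)) * ∑ i ∈ Finset.range (y + 2), f i := by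
        rw [Finset.sum_range_succ]
        push_cast at hb' ⊢
        ring_nf at hb' ⊢
        linarith
      push_cast
      calc g (y + 1) (y + 1) = g (y + 1) (y + 1) * 2 / 2 := by ring
        _ = (2 : ℝ) ^ (-((y:ℤ) + 1)) * (∑ i ∈ Finset.range (y + 2), f i) / 2 := by
            rw [this]
        _ = _ := by rw [← hpow]; push_cast; ring
    · intro x hx hx'
      have hc' := hc x y hx hx'
      have h2 := ih2 x (lt_trans (Nat.lt_succ_self y) hx) hx'
      rw [h2] at hc'
      push_cast
      calc g x (y + 1) = (g x (y + 1) + g x (y + 1)) / 2 := by ring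
        _ = (2 : ℝ) ^ (-((y:ℤ) + 1)) * f x / 2 := by rw [hc']
        _ = _ := by rw [← hpow]; push_cast; ring
end
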